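/- arXiv:1601.03191 — 2 statements merged into one kernel-verified Lean document; each statement's English description precedes it below -/
import Mathlib

section
/- For J, K ∈ P_f(R), one has J ∼ K if and only if the subgroups ⟨J⟩ and ⟨K⟩ of W generated by J and by K are equal. -/
/-!
The forward implication holds because `sts ∈ ⟨J⟩` for `s, t ∈ J`. For the converse, the key
fact is that a reflection `t` of the subgroup `H` generated by a set `J` of reflections is
`H`-conjugate to an element of `J`. Tits' permutation representation of `W` on `W × ZMod 2`
(which respects the braid relations because every reflection occurs an even number of times
in the inversion sequence of `(s_i s_j)^{m_ij}`) yields the reflection cocycle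
`η(w, x) ∈ ZMod 2`, finitely supported in `x`, with `η(uv, x) = η(v, x) + η(u, vxv⁻¹)`.
Summing `η(w, ·)` over the `H`-conjugacy class `C` of `t` is therefore additive on `H`; for a
reflection `r ∈ H`, conjugation by `r` pairs off the terms, leaving `1` if `r ∈ C` and `0`
otherwise. If `C` missed `J`, the sum would vanish on `J`, hence on `H`, yet it is `1` at `t`.
Finally, writing `t = v⁻¹ a v` with `a ∈ J` and `v` a word in `J`, the moves
`J ↦ J ∪ {sts}` reach `t` one letter of `v` at a time.
-/

open scoped Classical

noncomputable section

namespace CWpaper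

variable {B : Type} {M : CoxeterMatrix B} {W : Type} [Group W] (cs : CoxeterSystem M W)
variable (k : Type) [CommRing k]

/-- The set of reflections of the Coxeter system, as a subtype. -/
abbrev Refl := {t : W // cs.IsReflection t}

/-- Index type for the generators of `C_W(u)`: `inl i` indexes `g` generators,
`inr t` indexes `e` generators. -/
abbrev Gen := B ⊕ Refl cs

/-- The free-algebra generator corresponding to `g_s`. -/
def gf (i : B) : FreeAlgebra k (Gen cs) := FreeAlgebra.ι k (Sum.inl i)

/-- The free-algebra generator corresponding to `e_t`. -/
def ef (t : Refl cs) : FreeAlgebra k (Gen cs) := FreeAlgebra.ι k (Sum.inr t)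

/-- A simple reflection, as a reflection. -/
def simpleR (i : B) : Refl cs := ⟨cs.simple i, cs.isReflection_simple i⟩

/-- Conjugate of a reflection by a group element. -/
def conjR (w : W) (t : Refl cs) : Refl cs := ⟨w * t.1 * w⁻¹, t.2.conj w⟩

/-- The defining relations of the algebra `C_W(u)`. -/
inductive CWrel (u : B → k) : FreeAlgebra k (Gen cs) → FreeAlgebra k (Gen cs) → Prop
  | braid (i j : B) (h : M i j ≠ 0) :
      CWrel u (((CoxeterSystem.alternatingWord i j (M i j)).map (gf cs k)).prod)
              (((CoxeterSystem.alternatingWord j i (M i j)).map (gf cs k)).prod)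
  | idem (t : Refl cs) : CWrel u (ef cs k t * ef cs k t) (ef cs k t)
  | comm (t₁ t₂ : Refl cs) : CWrel u (ef cs k t₁ * ef cs k t₂) (ef cs k t₂ * ef cs k t₁)
  | conj (t t₁ : Refl cs) :
      CWrel u (ef cs k t * ef cs k t₁) (ef cs k t * ef cs k (conjR cs t.1 t₁))
  | move (i : B) (t : Refl cs) :
      CWrel u (gf cs k i * ef cs k t) (ef cs k (conjR cs (cs.simple i) t) * gf cs k i)
  | quad (i : B) :
      CWrel u (gf cs k i * gf cs k i)
        (1 + algebraMap k _ (u i - 1) * ef cs k (simpleR cs i) * (1 + gf cs k i))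

variable (u : B → k)

/-- The algebra `C_W(u)`. -/
abbrev CW := RingQuot (CWrel cs k u)

/-- The generator `g_s` of `C_W(u)`. -/
def gCW (i : B) : CW cs k u := RingQuot.mkAlgHom k (CWrel cs k u) (gf cs k i)

/-- The generator `e_t` of `C_W(u)`. -/
def eCW (t : Refl cs) : CW cs k u := RingQuot.mkAlgHom k (CWrel cs k u) (ef cs k t)

theorem eCW_commute (t₁ t₂ : Refl cs) : Commute (eCW cs k u t₁) (eCW cs k u t₂) := by
  have h := RingQuot.mkAlgHom_rel k (CWrel.comm (cs := cs) (k := k) (u := u) t₁ t₂)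
  simp only [map_mul] at h
  exact h

/-- The product `e_J = ∏_{t ∈ J} e_t` for a finite set of reflections `J`. -/
def eJ (J : Finset (Refl cs)) : CW cs k u :=
  J.noncommProd (eCW cs k u) (fun t₁ _ t₂ _ _ => eCW_commute cs k u t₁ t₂)

/-- `gg : W → C_W(u)` is the family `(g_w)_{w ∈ W}` iff for every reduced word
`l` for `w`, `gg w` is the product of the `g_s`, `s ∈ l`. -/
def IsGFamily (gg : W → CW cs k u) : Prop :=
  ∀ l : List B, cs.IsReduced l → gg (cs.wordProd l) = (l.map (gCW cs k u)).prod

end CWpaper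

namespace CWpaper

/-- The base relation generating `∼` on finite sets of reflections: `J ∼ J ∪ {sts}`
whenever `s, t ∈ J`. -/
def simStep {B : Type} {M : CoxeterMatrix B} {W : Type} [Group W] (cs : CoxeterSystem M W)
    (J K : Finset (Refl cs)) : Prop :=
  ∃ s ∈ J, ∃ t ∈ J, K = insert (conjR cs (s : W) t) J

end CWpaper

theorem List.even_count_of_getElem_add_eq {α : Type*} [BEq α] [LawfulBEq α] {l : List α}
    {m : ℕ} (hl : l.length = 2 * m) (h : ∀ k (hk : k < m), l[k] = l[k + m]) (a : α) :
    Even (l.count a) := by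
  have hdrop : l.drop m = l.take m := by
    refine List.ext_getElem (by simp; omega) fun k h₁ h₂ => ?_
    simp only [List.getElem_drop, List.getElem_take]
    rw [h k (by simp at h₂; omega)]
    congr 1
    omega
  rw [← List.take_append_drop m l, hdrop, List.count_append]
  exact ⟨_, rfl⟩

theorem finsum_mem_involution {α M : Type*} [AddCommMonoid M] {s : Set α} {f : α → M}
    (hf : (s ∩ Function.support f).Finite) (g : α → α) (h : ∀ a ∈ s, f a + f (g a) = 0)
    (g_ne : ∀ a ∈ s, f a ≠ 0 → g a ≠ a) (g_mem : ∀ a ∈ s, g a ∈ s)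
    (g_inv : ∀ a ∈ s, g (g a) = a) : ∑ᶠ a ∈ s, f a = 0 := by
  rw [finsum_mem_eq_sum f hf]
  have hmem {a : α} : a ∈ hf.toFinset ↔ a ∈ s ∧ f a ≠ 0 := hf.mem_toFinset
  refine Finset.sum_involution (fun a _ => g a) (fun a ha => h a (hmem.1 ha).1)
    (fun a ha => g_ne a (hmem.1 ha).1)
    (fun a ha => hmem.2 ⟨g_mem a (hmem.1 ha).1, fun hg => (hmem.1 ha).2 ?_⟩)
    (fun a ha => g_inv a (hmem.1 ha).1)
  simpa [hg] using h a (hmem.1 ha).1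

namespace CoxeterSystem

variable {B : Type*} {M : CoxeterMatrix B} {W : Type*} [Group W] (cs : CoxeterSystem M W)

theorem reverse_alternatingWord_two_mul (i j : B) (m : ℕ) :
    (alternatingWord i j (2 * m)).reverse = alternatingWord j i (2 * m) := by
  refine List.ext_getElem (by simp) fun k h₁ h₂ => ?_
  simp only [List.length_reverse, length_alternatingWord] at h₁
  rw [List.getElem_reverse, getElem_alternatingWord _ _ _ _ (by simp; omega),
    getElem_alternatingWord _ _ _ _ h₁]
  simp only [length_alternatingWord, Nat.even_iff]
  split_ifs <;> first | rfl | omega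

theorem prod_map_alternatingWord_two_mul {G : Type*} [Monoid G] (f : B → G) (i j : B) (m : ℕ) :
    ((alternatingWord i j (2 * m)).map f).prod = (f i * f j) ^ m := by
  induction m with
  | zero => simp [alternatingWord]
  | succ m ih =>
    rw [show 2 * (m + 1) = 2 * m + 1 + 1 by ring, alternatingWord_succ', alternatingWord_succ']
    simp [ih, pow_succ', mul_assoc]

theorem even_count_rightInvSeq_alternatingWord (i j : B) (x : W) :
    Even ((cs.rightInvSeq (alternatingWord i j (2 * M i j))).count x) := by
  rw [← reverse_alternatingWord_two_mul, rightInvSeq_reverse, List.count_reverse]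
  refine List.even_count_of_getElem_add_eq (m := M i j) (by simp) (fun k hk => ?_) x
  rw [getElem_leftInvSeq_alternatingWord _ _ _ _ _ (by omega),
    getElem_leftInvSeq_alternatingWord _ _ _ _ _ (by omega), prod_alternatingWord_eq_mul_pow,
    prod_alternatingWord_eq_mul_pow, show (2 * (k + M i j) + 1) / 2 = k + M i j by omega,
    pow_add, cs.simple_mul_simple_pow, mul_one, show (2 * k + 1) / 2 = k by omega]
  simp

/-- Tits' permutation of `W × ZMod 2` attached to the simple reflection `s i`. -/
def titsGen (i : B) : Equiv.Perm (W × ZMod 2) :=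
  Function.Involutive.toPerm
    (fun p => (cs.simple i * p.1 * cs.simple i, p.2 + if p.1 = cs.simple i then 1 else 0))
    (by
      rintro ⟨x, ε⟩
      have hx : cs.simple i * x * cs.simple i = cs.simple i ↔ x = cs.simple i := by
        constructor <;> intro h
        · simpa [mul_assoc] using congrArg (fun y => cs.simple i * y * cs.simple i) h
        · simp [h]
      ext
      · simp [mul_assoc]
      · by_cases h : x = cs.simple i
        · simp [h, add_assoc, CharTwo.add_self_eq_zero]
        · simp [h, hx])

theorem prod_map_titsGen_apply (ω : List B) (x : W) (ε : ZMod 2) :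
    (ω.map cs.titsGen).prod (x, ε) =
      (cs.wordProd ω * x * (cs.wordProd ω)⁻¹, ε + (cs.rightInvSeq ω).count x) := by
  induction ω with
  | nil => simp
  | cons i ω ih =>
    have hx : cs.wordProd ω * (x * (cs.wordProd ω)⁻¹) = cs.simple i ↔
        (cs.wordProd ω)⁻¹ * (cs.simple i * cs.wordProd ω) = x := by
      constructor <;> intro h <;> rw [← h] <;> group
    simp only [List.map_cons, List.prod_cons, Equiv.Perm.mul_apply, ih, titsGen, rightInvSeq,
      List.count_cons, wordProd_cons]
    simp [mul_assoc, add_assoc, hx]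

theorem titsGen_isLiftable : M.IsLiftable cs.titsGen := by
  intro i j
  rw [← prod_map_alternatingWord_two_mul]
  ext ⟨x, ε⟩ : 1
  obtain ⟨n, hn⟩ := cs.even_count_rightInvSeq_alternatingWord i j x
  rw [prod_map_titsGen_apply, prod_alternatingWord_eq_mul_pow, hn]
  simp [cs.simple_mul_simple_pow, CharTwo.add_self_eq_zero]

def titsRep : W →* Equiv.Perm (W × ZMod 2) := cs.lift ⟨cs.titsGen, cs.titsGen_isLiftable⟩

theorem titsRep_wordProd (ω : List B) :
    cs.titsRep (cs.wordProd ω) = (ω.map cs.titsGen).prod := by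
  rw [wordProd, map_list_prod, List.map_map]
  exact congrArg List.prod (List.map_congr_left fun i _ => cs.lift_apply_simple _ i)

/-- Dyer's reflection cocycle, written additively; its support is the set of right inversions
of `w`. -/
def reflectionCocycle (w x : W) : ZMod 2 := (cs.titsRep w (x, 0)).2

theorem reflectionCocycle_wordProd (ω : List B) (x : W) :
    cs.reflectionCocycle (cs.wordProd ω) x = (cs.rightInvSeq ω).count x := by
  rw [reflectionCocycle, titsRep_wordProd, prod_map_titsGen_apply, zero_add]

theorem titsRep_apply (w x : W) (ε : ZMod 2) :
    cs.titsRep w (x, ε) = (w * x * w⁻¹, ε + cs.reflectionCocycle w x) := by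
  obtain ⟨ω, rfl⟩ := cs.wordProd_surjective w
  rw [reflectionCocycle_wordProd, titsRep_wordProd, prod_map_titsGen_apply]

theorem reflectionCocycle_mul (u v x : W) :
    cs.reflectionCocycle (u * v) x =
      cs.reflectionCocycle v x + cs.reflectionCocycle u (v * x * v⁻¹) := by
  have h := congrArg Prod.snd (cs.titsRep_apply (u * v) x 0)
  rw [map_mul, Equiv.Perm.mul_apply, titsRep_apply, titsRep_apply] at h
  simpa using h.symm

theorem reflectionCocycle_one (x : W) : cs.reflectionCocycle 1 x = 0 := by
  simpa using cs.reflectionCocycle_wordProd [] x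

theorem reflectionCocycle_simple (i : B) (x : W) :
    cs.reflectionCocycle (cs.simple i) x = if x = cs.simple i then 1 else 0 := by
  simpa [List.count_singleton, @eq_comm _ (cs.simple i)] using cs.reflectionCocycle_wordProd [i] x

theorem finite_support_reflectionCocycle (w : W) :
    (Function.support (cs.reflectionCocycle w)).Finite := by
  obtain ⟨ω, rfl⟩ := cs.wordProd_surjective w
  refine (cs.rightInvSeq ω).finite_toSet.subset fun x hx => ?_
  rw [Function.mem_support, reflectionCocycle_wordProd] at hx
  exact List.count_pos_iff.mp (Nat.pos_of_ne_zero fun h => hx (by simp [h]))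

theorem reflectionCocycle_inv_conj (u x : W) :
    cs.reflectionCocycle u⁻¹ (u * x * u⁻¹) = cs.reflectionCocycle u x := by
  have h := cs.reflectionCocycle_mul u⁻¹ u x
  rw [inv_mul_cancel, reflectionCocycle_one] at h
  exact (CharTwo.add_eq_zero.mp h.symm).symm

theorem reflectionCocycle_conj (u v y : W) :
    cs.reflectionCocycle (u * v * u⁻¹) (u * y * u⁻¹) =
      cs.reflectionCocycle u y + cs.reflectionCocycle v y +
        cs.reflectionCocycle u (v * y * v⁻¹) := by
  rw [reflectionCocycle_mul, reflectionCocycle_inv_conj,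
    show u⁻¹ * (u * y * u⁻¹) * u⁻¹⁻¹ = y by group, reflectionCocycle_mul]
  ring

theorem finsum_reflectionCocycle_mul {C : Set W} {v : W}
    (hC : Set.BijOn (fun x => v * x * v⁻¹) C C) (u : W) :
    ∑ᶠ x ∈ C, cs.reflectionCocycle (u * v) x =
      ∑ᶠ x ∈ C, cs.reflectionCocycle u x + ∑ᶠ x ∈ C, cs.reflectionCocycle v x := by
  have hfin : (C ∩ Function.support fun x => cs.reflectionCocycle u (v * x * v⁻¹)).Finite :=
    ((cs.finite_support_reflectionCocycle u).preimage
      (MulAut.conj v).injective.injOn).inter_of_right C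
  simp_rw [reflectionCocycle_mul]
  rw [finsum_mem_add_distrib' ((cs.finite_support_reflectionCocycle v).inter_of_right C) hfin,
    add_comm, finsum_mem_eq_of_bijOn _ hC fun x _ => rfl]

namespace IsReflection

variable {cs} {t : W}

theorem reflectionCocycle_conj_self (ht : cs.IsReflection t) (x : W) :
    cs.reflectionCocycle t (t * x * t⁻¹) = cs.reflectionCocycle t x := by
  calc cs.reflectionCocycle t (t * x * t⁻¹) = cs.reflectionCocycle t⁻¹ (t * x * t⁻¹) := by
        rw [ht.inv]
    _ = cs.reflectionCocycle t x := cs.reflectionCocycle_inv_conj t x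

theorem reflectionCocycle_of_commute {x : W} (ht : cs.IsReflection t) (h : Commute t x) :
    cs.reflectionCocycle t x = if x = t then 1 else 0 := by
  obtain ⟨u, i, rfl⟩ := ht
  obtain ⟨y, rfl⟩ : ∃ y, x = u * y * u⁻¹ := ⟨u⁻¹ * x * u, by group⟩
  have hy : cs.simple i * y * (cs.simple i)⁻¹ = y :=
    calc cs.simple i * y * (cs.simple i)⁻¹
        = u⁻¹ * ((u * cs.simple i * u⁻¹) * (u * y * u⁻¹)) * u * (cs.simple i)⁻¹ := by
          group
      _ = u⁻¹ * ((u * y * u⁻¹) * (u * cs.simple i * u⁻¹)) * u * (cs.simple i)⁻¹ := by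
        rw [h.eq]
      _ = y := by group
  rw [reflectionCocycle_conj, hy, reflectionCocycle_simple, add_right_comm,
    CharTwo.add_self_eq_zero, zero_add]
  simp

theorem finsum_reflectionCocycle (ht : cs.IsReflection t) {C : Set W}
    (hC : Set.MapsTo (fun x => t * x * t⁻¹) C C) :
    ∑ᶠ x ∈ C, cs.reflectionCocycle t x = if t ∈ C then 1 else 0 := by
  have hfin := (cs.finite_support_reflectionCocycle t).inter_of_right (C \ {t})
  have hrest : ∑ᶠ x ∈ C \ {t}, cs.reflectionCocycle t x = 0 := by
    refine finsum_mem_involution hfin (fun x => t * x * t⁻¹) (fun x _ => ?_) (fun x hx => ?_)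
      (fun x hx => ⟨hC hx.1, fun h => hx.2 ?_⟩) (fun x _ => ?_)
    · rw [ht.reflectionCocycle_conj_self, CharTwo.add_self_eq_zero]
    · refine fun hne hcomm => hne ?_
      rw [ht.reflectionCocycle_of_commute (mul_inv_eq_iff_eq_mul.mp hcomm),
        if_neg (show x ≠ t from hx.2)]
    · exact mul_left_cancel (mul_inv_eq_iff_eq_mul.mp h)
    · calc t * (t * x * t⁻¹) * t⁻¹ = t * t * x * (t * t)⁻¹ := by group
        _ = x := by rw [ht.mul_self]; group
  by_cases htC : t ∈ C
  · rw [if_pos htC, ← Set.insert_eq_of_mem htC, ← Set.insert_sdiff_singleton,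
      finsum_mem_insert' _ (fun h => h.2 rfl) hfin, hrest, add_zero,
      ht.reflectionCocycle_of_commute (Commute.refl t), if_pos rfl]
  · rw [if_neg htC, ← hrest, Set.sdiff_singleton_eq_self htC]

end IsReflection

theorem exists_conj_mem_of_isReflection_mem_closure {J : Set W}
    (hJ : ∀ a ∈ J, cs.IsReflection a) {t : W} (ht : cs.IsReflection t)
    (htJ : t ∈ Subgroup.closure J) : ∃ v ∈ Subgroup.closure J, v * t * v⁻¹ ∈ J := by
  set H := Subgroup.closure J
  by_contra! hcon
  let C : Set W := {x | ∃ v ∈ H, v * t * v⁻¹ = x}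
  have hC : ∀ v ∈ H, Set.BijOn (fun x => v * x * v⁻¹) C C := by
    refine fun v hv => ⟨?_, (MulAut.conj v).injective.injOn, ?_⟩
    · rintro _ ⟨w, hw, rfl⟩
      exact ⟨v * w, H.mul_mem hv hw, by group⟩
    · rintro _ ⟨w, hw, rfl⟩
      exact ⟨v⁻¹ * w * t * w⁻¹ * v,
        ⟨v⁻¹ * w, H.mul_mem (H.inv_mem hv) hw, by group⟩, by group⟩
  have hJC : ∀ a ∈ J, ∑ᶠ x ∈ C, cs.reflectionCocycle a x = 0 := by
    intro a ha
    rw [(hJ a ha).finsum_reflectionCocycle (hC a (Subgroup.subset_closure ha)).mapsTo, if_neg]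
    rintro ⟨v, hv, rfl⟩
    exact hcon v hv ha
  have hH : ∀ w ∈ H, ∑ᶠ x ∈ C, cs.reflectionCocycle w x = 0 := by
    intro w hw
    induction hw using Subgroup.closure_induction_left with
    | one => simp [reflectionCocycle_one]
    | mul_left a ha w hw ih =>
      rw [cs.finsum_reflectionCocycle_mul (hC w hw), ih, hJC a ha, add_zero]
    | inv_mul_cancel a ha w hw ih =>
      rw [(hJ a ha).inv, cs.finsum_reflectionCocycle_mul (hC w hw), ih, hJC a ha, add_zero]
  have ht1 := hH t htJ
  rw [ht.finsum_reflectionCocycle (hC t htJ).mapsTo, if_pos ⟨1, H.one_mem, by group⟩] at ht1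
  exact one_ne_zero ht1

end CoxeterSystem

namespace CWpaper

section

variable {B : Type} {M : CoxeterMatrix B} {W : Type} [Group W] (cs : CoxeterSystem M W)

abbrev reflClosure (J : Finset (Refl cs)) : Subgroup W :=
  Subgroup.closure (Subtype.val '' (J : Set (Refl cs)))

theorem conjR_mul (u v : W) (t : Refl cs) : conjR cs (u * v) t = conjR cs u (conjR cs v t) :=
  Subtype.ext (by simp [conjR, mul_assoc])

theorem reflClosure_eq_of_simStep {J K : Finset (Refl cs)} (h : simStep cs J K) :
    reflClosure cs J = reflClosure cs K := by
  obtain ⟨s, hs, t, ht, rfl⟩ := h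
  have hmem {r : Refl cs} (hr : r ∈ J) : (r : W) ∈ reflClosure cs J :=
    Subgroup.subset_closure ⟨r, hr, rfl⟩
  refine le_antisymm (Subgroup.closure_mono (Set.image_mono (by simp))) ?_
  rw [Subgroup.closure_le, Finset.coe_insert, Set.image_insert_eq, Set.insert_subset_iff]
  exact ⟨mul_mem (mul_mem (hmem hs) (hmem ht)) (inv_mem (hmem hs)), Subgroup.subset_closure⟩

theorem eqvGen_simStep_insert_conjR {J : Finset (Refl cs)} {a u : Refl cs} (ha : a ∈ J)
    (hu : ∀ A, J ⊆ A → Relation.EqvGen (simStep cs) A (insert u A)) {A : Finset (Refl cs)}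
    (hA : J ⊆ A) : Relation.EqvGen (simStep cs) A (insert (conjR cs a u) A) := by
  have hstep : simStep cs (insert u A) (insert (conjR cs a u) (insert u A)) :=
    ⟨a, Finset.mem_insert_of_mem (hA ha), u, Finset.mem_insert_self u A, rfl⟩
  have hback := hu (insert (conjR cs a u) A) (hA.trans (Finset.subset_insert _ _))
  rw [Finset.insert_comm] at hback
  exact ((hu A hA).trans _ _ _ (.rel _ _ hstep)).trans _ _ _ hback.symm

theorem eqvGen_simStep_insert_of_mem_reflClosure {J : Finset (Refl cs)} {t : Refl cs}
    (ht : (t : W) ∈ reflClosure cs J) {A : Finset (Refl cs)} (hA : J ⊆ A) :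
    Relation.EqvGen (simStep cs) A (insert t A) := by
  obtain ⟨v, hv, a, haJ, hav⟩ := cs.exists_conj_mem_of_isReflection_mem_closure
    (by rintro _ ⟨b, -, rfl⟩; exact b.2) t.2 ht
  have hconj : ∀ w ∈ reflClosure cs J, ∀ A, J ⊆ A →
      Relation.EqvGen (simStep cs) A (insert (conjR cs w a) A) := by
    intro w hw
    induction hw using Subgroup.closure_induction_left with
    | one =>
      intro A hA
      rw [show conjR cs 1 a = a from Subtype.ext (by simp [conjR]),
        Finset.insert_eq_of_mem (hA haJ)]
      exact .refl A
    | mul_left b hb w hw ih =>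
      obtain ⟨b, hbJ, rfl⟩ := hb
      rw [conjR_mul]
      exact fun A hA => eqvGen_simStep_insert_conjR cs hbJ ih hA
    | inv_mul_cancel b hb w hw ih =>
      obtain ⟨b, hbJ, rfl⟩ := hb
      rw [b.2.inv, conjR_mul]
      exact fun A hA => eqvGen_simStep_insert_conjR cs hbJ ih hA
  have htv : t = conjR cs v⁻¹ a := Subtype.ext (by simp only [conjR, hav]; group)
  rw [htv]
  exact hconj _ (inv_mem hv) A hA

theorem eqvGen_simStep_union_of_reflClosure_le {J K : Finset (Refl cs)}
    (hK : reflClosure cs K ≤ reflClosure cs J) : Relation.EqvGen (simStep cs) J (J ∪ K) := by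
  have hmem : ∀ t ∈ K, (t : W) ∈ reflClosure cs J :=
    fun t ht => hK (Subgroup.subset_closure ⟨t, ht, rfl⟩)
  clear hK
  induction K using Finset.induction_on with
  | empty => rw [Finset.union_empty]; exact .refl J
  | insert a K _ ih =>
    rw [Finset.union_insert]
    exact (ih fun t ht => hmem t (Finset.mem_insert_of_mem ht)).trans _ _ _
      (eqvGen_simStep_insert_of_mem_reflClosure cs (hmem a (Finset.mem_insert_self a K))
        Finset.subset_union_left)

end

/-- For finite sets of reflections `J, K`, one has `J ∼ K` if and only if
`⟨J⟩ = ⟨K⟩`. -/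
theorem statement1 {B : Type} {M : CoxeterMatrix B} {W : Type} [Group W]
    (cs : CoxeterSystem M W) (J K : Finset (Refl cs)) :
    Relation.EqvGen (simStep cs) J K ↔
      Subgroup.closure (Subtype.val '' (J : Set (Refl cs))) =
        Subgroup.closure (Subtype.val '' (K : Set (Refl cs))) := by
  refine ⟨fun h => ?_, fun h => ?_⟩
  · have hequiv : Equivalence fun J K : Finset (Refl cs) => reflClosure cs J = reflClosure cs K :=
      ⟨fun _ => rfl, Eq.symm, Eq.trans⟩
    exact hequiv.eqvGen_iff.mp
      (Relation.EqvGen.mono (fun _ _ => reflClosure_eq_of_simStep cs) J K h)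
  · have hKJ := eqvGen_simStep_union_of_reflClosure_le cs h.le
    rw [Finset.union_comm] at hKJ
    exact (eqvGen_simStep_union_of_reflClosure_le cs h.ge).trans _ _ _ hKJ.symm

end CWpaper
end
end

section
/- There exists an involutive ring automorphism of C_W over k = ℤ[v_s^{±1} : s ∈ S] which maps v_s ↦ v_s⁻¹, H_w ↦ (H_{w⁻¹})⁻¹ for every w ∈ W, and e_{W₀} ↦ e_{W₀} for every finitely generated reflection subgroup W₀ ∈ 𝒲. Moreover it is compatible with Lusztig's involution of the Iwahori–Hecke algebra H_W (the ring involution determined by v_s ↦ v_s⁻¹ and H⁰_w ↦ (H⁰_{w⁻¹})⁻¹): the projection 𝔭 : C_W → H_W intertwines the two involutions. -/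
/-!
The bar map is defined on generators: `ι₀` on scalars, `g_s ↦ g_s⁻¹`, `e_t ↦ e_t`. It respects
the defining relations because `g_s⁻¹ = g_s + (u_s⁻¹ - 1) e_s (1 + g_s)` satisfies them with `u`
replaced by `u⁻¹`: the braid relations invert, `g_s⁻¹ e_t = e_{s t s} g_s⁻¹`, and
`(g_s⁻¹)² = 1 + (u_s⁻¹ - 1) e_s (1 + g_s⁻¹)`. A ring map sending `g_s` to `g_s⁻¹` sends `g_s⁻¹`
back to `g_s`, so the bar map is an involution, and `H_w ↦ H_{w⁻¹}⁻¹` follows multiplicatively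
from `H_s ↦ H_s⁻¹`. Finally `𝔭 ∘ bar` and `Ψ ∘ 𝔭` are `ι₀`-semilinear ring maps agreeing on
generators, since both send `g_s` to `T_s⁻¹` and `e_t` to `1`.
-/

open scoped Classical

noncomputable section

namespace CWpaper

/-- The defining relations of the Iwahori–Hecke algebra `H_W(u)`. -/
inductive Hrel {B : Type} (M : CoxeterMatrix B) (k : Type) [CommRing k] (u : B → k) :
    FreeAlgebra k B → FreeAlgebra k B → Prop
  | braid (i j : B) (h : M i j ≠ 0) :
      Hrel M k u (((CoxeterSystem.alternatingWord i j (M i j)).map (FreeAlgebra.ι k)).prod)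
                 (((CoxeterSystem.alternatingWord j i (M i j)).map (FreeAlgebra.ι k)).prod)
  | quad (i : B) :
      Hrel M k u (FreeAlgebra.ι k i * FreeAlgebra.ι k i)
        (algebraMap k _ (u i) + algebraMap k _ (u i - 1) * FreeAlgebra.ι k i)

/-- The Iwahori–Hecke algebra `H_W(u)`. -/
abbrev HW {B : Type} (M : CoxeterMatrix B) (k : Type) [CommRing k] (u : B → k) :=
  RingQuot (Hrel M k u)

/-- The generator `T_s` of the Iwahori–Hecke algebra. -/
def THW {B : Type} (M : CoxeterMatrix B) (k : Type) [CommRing k] (u : B → k) (i : B) :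
    HW M k u :=
  RingQuot.mkAlgHom k (Hrel M k u) (FreeAlgebra.ι k i)

end CWpaper

namespace CWpaper

/-- The parameters `u_s = v_s²`. -/
def usq {B : Type} (k : Type) [CommRing k] (v : B → kˣ) : B → k := fun i => (v i : k) ^ 2

end CWpaper

section QuadraticInverse

variable {k A : Type*} [CommRing k] [Ring A] [Algebra k A] {u c : k} {e g : A}

lemma mul_idem_quad_eq_smul (he : IsIdempotentElem e) (hge : Commute g e)
    (hg : g * g = 1 + (u - 1) • (e * (1 + g))) :
    g * (e * (1 + g)) = u • (e * (1 + g)) := by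
  have hee : e * (e * (1 + g)) = e * (1 + g) := by rw [← mul_assoc, he.eq]
  calc g * (e * (1 + g)) = e * g + e * (g * g) := by
        rw [← mul_assoc, hge.eq, mul_assoc, mul_add, mul_one, mul_add]
    _ = u • (e * (1 + g)) := by
        rw [hg, mul_add, mul_one, mul_smul_comm, hee, mul_add, mul_one]; module

def quadInv (c : k) (e g : A) : A := g + (c - 1) • (e * (1 + g))

lemma mul_quadInv (he : IsIdempotentElem e) (hge : Commute g e)
    (hg : g * g = 1 + (u - 1) • (e * (1 + g))) (hcu : c * u = 1) :
    g * quadInv c e g = 1 := by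
  rw [quadInv, mul_add, mul_smul_comm, mul_idem_quad_eq_smul he hge hg, hg, smul_smul,
    add_assoc, ← add_smul, show u - 1 + (c - 1) * u = c * u - 1 by ring, hcu, sub_self,
    zero_smul, add_zero]

lemma commute_quadInv (hge : Commute g e) : Commute g (quadInv c e g) :=
  (Commute.refl g).add_right (((hge.mul_right ((Commute.one_right g).add_right
    (Commute.refl g)))).smul_right _)

lemma quadInv_mul (he : IsIdempotentElem e) (hge : Commute g e)
    (hg : g * g = 1 + (u - 1) • (e * (1 + g))) (hcu : c * u = 1) :
    quadInv c e g * g = 1 := by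
  rw [← (commute_quadInv hge).eq, mul_quadInv he hge hg hcu]

lemma quadInv_mul_self (he : IsIdempotentElem e) (hge : Commute g e)
    (hg : g * g = 1 + (u - 1) • (e * (1 + g))) (hcu : c * u = 1) :
    quadInv c e g * quadInv c e g = 1 + (c - 1) • (e * (1 + quadInv c e g)) := by
  set h := quadInv c e g
  set X := e * (1 + g)
  have hX : h * X = c • X := by
    have hgX := mul_idem_quad_eq_smul he hge hg
    calc h * X = (c * u) • (h * X) := by rw [hcu, one_smul]
      _ = c • (h * (g * X)) := by rw [hgX, mul_smul_comm, smul_smul]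
      _ = c • X := by rw [← mul_assoc, quadInv_mul he hge hg hcu, one_mul]
  have heh : e * (1 + h) = c • X := by
    have hee : e * X = X := by rw [← mul_assoc, he.eq]
    rw [show h = g + (c - 1) • X from rfl, ← add_assoc, mul_add, mul_smul_comm, hee]
    module
  calc h * h = h * g + (c - 1) • (h * X) := by
        rw [show h * h = h * (g + (c - 1) • X) from rfl, mul_add, mul_smul_comm]
    _ = 1 + (c - 1) • (e * (1 + h)) := by rw [quadInv_mul he hge hg hcu, hX, heh]

end QuadraticInverse

section FreeAlgebra

variable {k X A : Type*} [CommSemiring k] [Semiring A]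

def semilinearLift (σ : k →+* A) (hσ : ∀ c x, σ c * x = x * σ c) (f : X → A) :
    FreeAlgebra k X →+* A :=
  letI := σ.toAlgebra' hσ
  (FreeAlgebra.lift k f).toRingHom

lemma semilinearLift_ι (σ : k →+* A) (hσ : ∀ c x, σ c * x = x * σ c) (f : X → A) (x : X) :
    semilinearLift σ hσ f (FreeAlgebra.ι k x) = f x :=
  letI := σ.toAlgebra' hσ
  FreeAlgebra.lift_ι_apply f x

lemma semilinearLift_algebraMap (σ : k →+* A) (hσ : ∀ c x, σ c * x = x * σ c) (f : X → A)
    (c : k) : semilinearLift σ hσ f (algebraMap k (FreeAlgebra k X) c) = σ c :=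
  letI := σ.toAlgebra' hσ
  (FreeAlgebra.lift k f).commutes c

lemma freeAlgebra_ringHom_ext {f f' : FreeAlgebra k X →+* A}
    (hc : ∀ c, f (algebraMap k _ c) = f' (algebraMap k _ c))
    (hx : ∀ x, f (FreeAlgebra.ι k x) = f' (FreeAlgebra.ι k x)) : f = f' := by
  ext a
  induction a using FreeAlgebra.induction with
  | grade0 c => exact hc c
  | grade1 x => exact hx x
  | mul a b ha hb => rw [map_mul, map_mul, ha, hb]
  | add a b ha hb => rw [map_add, map_add, ha, hb]

end FreeAlgebra

lemma map_smul_of_map_algebraMap {k A A' F : Type*} [CommSemiring k] [Semiring A] [Semiring A']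
    [Algebra k A] [Algebra k A'] [FunLike F A A'] [RingHomClass F A A'] (σ : F) (τ : k →+* k)
    (hσ : ∀ c, σ (algebraMap k A c) = algebraMap k A' (τ c)) (c : k) (x : A) :
    σ (c • x) = τ c • σ x := by
  rw [Algebra.smul_def, map_mul, hσ, ← Algebra.smul_def]

lemma Units.val_list_prod_map {ι M : Type*} [Monoid M] (f : ι → Mˣ) (l : List ι) :
    (((l.map f).prod : Mˣ) : M) = (l.map fun i => (f i : M)).prod := by
  rw [← Units.coeHom_apply, map_list_prod, List.map_map]
  rfl

lemma map_list_prod_eq_inv_prod_reverse {ι M : Type*} [Monoid M] (σ : M →* M) (a : ι → Mˣ)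
    (hσ : ∀ i, σ (a i) = ↑(a i)⁻¹) (l : List ι) :
    σ (l.map fun i => (a i : M)).prod = ↑((l.reverse.map a).prod)⁻¹ := by
  rw [List.prod_inv_reverse, List.map_reverse, List.map_reverse, List.reverse_reverse,
    List.map_map, Units.val_list_prod_map, map_list_prod, List.map_map]
  exact congrArg List.prod (List.map_congr_left fun i _ => hσ i)

namespace CoxeterSystem

lemma alternatingWord_reverse {B : Type*} (i j : B) (m : ℕ) :
    (alternatingWord i j m).reverse =
      if Even m then alternatingWord j i m else alternatingWord i j m := by
  induction m generalizing i j with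
  | zero => simp [alternatingWord]
  | succ m ih =>
    conv_lhs => rw [alternatingWord_succ, List.concat_eq_append, List.reverse_append, ih]
    rw [alternatingWord_succ', alternatingWord_succ']
    by_cases hm : Even m <;> simp [hm, Nat.even_add_one]

lemma prod_alternatingWord_inv {B G : Type*} [Group G] {f : B → G} {i j : B} {m : ℕ}
    (h : ((alternatingWord i j m).map f).prod = ((alternatingWord j i m).map f).prod) :
    ((alternatingWord i j m).map fun b => (f b)⁻¹).prod =
      ((alternatingWord j i m).map fun b => (f b)⁻¹).prod := by
  have h' := congrArg (·⁻¹) h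
  simp only [List.prod_inv_reverse, List.map_map, ← List.map_reverse,
    alternatingWord_reverse] at h'
  by_cases hm : Even m
  · simpa [hm, Function.comp_def] using h'.symm
  · simpa [hm, Function.comp_def] using h'

end CoxeterSystem

namespace CWpaper

section Relations

variable {B : Type} {M : CoxeterMatrix B} {W : Type} [Group W] (cs : CoxeterSystem M W)
variable (k : Type) [CommRing k] (u : B → k)

lemma conjR_simple_simpleR (i : B) : conjR cs (cs.simple i) (simpleR cs i) = simpleR cs i :=
  Subtype.ext (by simp [conjR, simpleR])

lemma conjR_simple_conjR_simple (i : B) (t : Refl cs) :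
    conjR cs (cs.simple i) (conjR cs (cs.simple i) t) = t :=
  Subtype.ext (by simp [conjR, mul_assoc])

lemma isIdempotentElem_eCW (t : Refl cs) : IsIdempotentElem (eCW cs k u t) := by
  have h := RingQuot.mkAlgHom_rel k (CWrel.idem (cs := cs) (u := u) t)
  rw [map_mul] at h
  exact h

lemma gCW_mul_eCW (i : B) (t : Refl cs) :
    gCW cs k u i * eCW cs k u t = eCW cs k u (conjR cs (cs.simple i) t) * gCW cs k u i := by
  have h := RingQuot.mkAlgHom_rel k (CWrel.move (cs := cs) (u := u) i t)
  rw [map_mul, map_mul] at h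
  exact h

lemma eCW_mul_eCW_conjR (t t₁ : Refl cs) :
    eCW cs k u t * eCW cs k u t₁ = eCW cs k u t * eCW cs k u (conjR cs t.1 t₁) := by
  have h := RingQuot.mkAlgHom_rel k (CWrel.conj (cs := cs) (u := u) t t₁)
  rw [map_mul, map_mul] at h
  exact h

lemma commute_gCW_eCW_simpleR (i : B) : Commute (gCW cs k u i) (eCW cs k u (simpleR cs i)) := by
  have h := gCW_mul_eCW cs k u i (simpleR cs i)
  rwa [conjR_simple_simpleR] at h

lemma gCW_mul_self (i : B) :
    gCW cs k u i * gCW cs k u i =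
      1 + (u i - 1) • (eCW cs k u (simpleR cs i) * (1 + gCW cs k u i)) := by
  have h := RingQuot.mkAlgHom_rel k (CWrel.quad (cs := cs) (u := u) i)
  simp only [map_mul, map_add, map_one, AlgHom.commutes] at h
  rw [Algebra.smul_def, ← mul_assoc]
  exact h

lemma prod_alternatingWord_gCW (i j : B) (h : M i j ≠ 0) :
    ((CoxeterSystem.alternatingWord i j (M i j)).map (gCW cs k u)).prod =
      ((CoxeterSystem.alternatingWord j i (M i j)).map (gCW cs k u)).prod := by
  have h := RingQuot.mkAlgHom_rel k (CWrel.braid (cs := cs) (u := u) i j h)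
  rwa [map_list_prod, map_list_prod, List.map_map, List.map_map] at h

lemma CW.ringHom_ext {T : Type*} [Semiring T] {f f' : CW cs k u →+* T}
    (hc : ∀ c, f (algebraMap k _ c) = f' (algebraMap k _ c))
    (hg : ∀ i, f (gCW cs k u i) = f' (gCW cs k u i))
    (he : ∀ t, f (eCW cs k u t) = f' (eCW cs k u t)) : f = f' := by
  refine RingQuot.ringQuot_ext f f' (freeAlgebra_ringHom_ext (fun c => ?_) ?_)
  all_goals simp only [RingHom.comp_apply, ← RingQuot.mkAlgHom_coe k, AlgHom.coe_toRingHom]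
  · simpa only [AlgHom.commutes] using hc c
  · rintro (i | t)
    · exact hg i
    · exact he t

end Relations

section BarInvolution

variable {B : Type} {M : CoxeterMatrix B} {W : Type} [Group W] (cs : CoxeterSystem M W)
variable (k : Type) [CommRing k] (u : B → k) (ι₀ : k ≃+* k) (hιu : ∀ i, ι₀ (u i) * u i = 1)

def gUnit (i : B) : (CW cs k u)ˣ where
  val := gCW cs k u i
  inv := quadInv (ι₀ (u i)) (eCW cs k u (simpleR cs i)) (gCW cs k u i)
  val_inv := mul_quadInv (isIdempotentElem_eCW cs k u _) (commute_gCW_eCW_simpleR cs k u i)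
    (gCW_mul_self cs k u i) (hιu i)
  inv_val := quadInv_mul (isIdempotentElem_eCW cs k u _) (commute_gCW_eCW_simpleR cs k u i)
    (gCW_mul_self cs k u i) (hιu i)

lemma gUnit_val (i : B) : (gUnit cs k u ι₀ hιu i : CW cs k u) = gCW cs k u i := rfl

lemma gUnit_inv_mul_self (i : B) :
    (↑(gUnit cs k u ι₀ hιu i)⁻¹ * ↑(gUnit cs k u ι₀ hιu i)⁻¹ : CW cs k u) =
      1 + (ι₀ (u i) - 1) • (eCW cs k u (simpleR cs i) * (1 + ↑(gUnit cs k u ι₀ hιu i)⁻¹)) :=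
  quadInv_mul_self (isIdempotentElem_eCW cs k u _) (commute_gCW_eCW_simpleR cs k u i)
    (gCW_mul_self cs k u i) (hιu i)

lemma gUnit_inv_mul_eCW (i : B) (t : Refl cs) :
    (↑(gUnit cs k u ι₀ hιu i)⁻¹ * eCW cs k u t : CW cs k u) =
      eCW cs k u (conjR cs (cs.simple i) t) * ↑(gUnit cs k u ι₀ hιu i)⁻¹ := by
  have h := gCW_mul_eCW cs k u i (conjR cs (cs.simple i) t)
  rw [conjR_simple_conjR_simple] at h
  rw [Units.inv_mul_eq_iff_eq_mul, ← mul_assoc, Units.eq_mul_inv_iff_mul_eq, gUnit_val]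
  exact h.symm

lemma prod_alternatingWord_gUnit_inv (i j : B) (h : M i j ≠ 0) :
    ((CoxeterSystem.alternatingWord i j (M i j)).map
        fun b => (↑(gUnit cs k u ι₀ hιu b)⁻¹ : CW cs k u)).prod =
      ((CoxeterSystem.alternatingWord j i (M i j)).map
        fun b => (↑(gUnit cs k u ι₀ hιu b)⁻¹ : CW cs k u)).prod := by
  have hunits : ((CoxeterSystem.alternatingWord i j (M i j)).map (gUnit cs k u ι₀ hιu)).prod =
      ((CoxeterSystem.alternatingWord j i (M i j)).map (gUnit cs k u ι₀ hιu)).prod :=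
    Units.ext (by
      simpa only [Units.val_list_prod_map, gUnit_val] using prod_alternatingWord_gCW cs k u i j h)
  simpa only [Units.val_list_prod_map] using
    congrArg Units.val (CoxeterSystem.prod_alternatingWord_inv hunits)

def barFree : FreeAlgebra k (Gen cs) →+* CW cs k u :=
  semilinearLift ((algebraMap k (CW cs k u)).comp ι₀.toRingHom)
    (fun c x => Algebra.commutes (ι₀ c) x)
    (Sum.elim (fun i => ↑(gUnit cs k u ι₀ hιu i)⁻¹) (eCW cs k u))

lemma barFree_gf (i : B) : barFree cs k u ι₀ hιu (gf cs k i) = ↑(gUnit cs k u ι₀ hιu i)⁻¹ :=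
  semilinearLift_ι _ _ _ _

lemma barFree_ef (t : Refl cs) : barFree cs k u ι₀ hιu (ef cs k t) = eCW cs k u t :=
  semilinearLift_ι _ _ _ _

lemma barFree_algebraMap (c : k) :
    barFree cs k u ι₀ hιu (algebraMap k _ c) = algebraMap k (CW cs k u) (ι₀ c) :=
  semilinearLift_algebraMap _ _ _ _

lemma barFree_rel {x y : FreeAlgebra k (Gen cs)} (h : CWrel cs k u x y) :
    barFree cs k u ι₀ hιu x = barFree cs k u ι₀ hιu y := by
  induction h with
  | braid i j hij =>
    simp only [map_list_prod, List.map_map, Function.comp_def, barFree_gf]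
    exact prod_alternatingWord_gUnit_inv cs k u ι₀ hιu i j hij
  | idem t => rw [map_mul, barFree_ef, (isIdempotentElem_eCW cs k u t).eq]
  | comm t₁ t₂ => rw [map_mul, map_mul, barFree_ef, barFree_ef, (eCW_commute cs k u t₁ t₂).eq]
  | conj t t₁ => rw [map_mul, map_mul, barFree_ef, barFree_ef, barFree_ef, eCW_mul_eCW_conjR]
  | move i t => rw [map_mul, map_mul, barFree_ef, barFree_ef, barFree_gf, gUnit_inv_mul_eCW]
  | quad i =>
    simp only [map_mul, map_add, map_one, barFree_gf, barFree_ef, barFree_algebraMap, map_sub]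
    rw [gUnit_inv_mul_self, Algebra.smul_def, map_sub, map_one, mul_assoc]

def bar : CW cs k u →+* CW cs k u :=
  RingQuot.lift ⟨barFree cs k u ι₀ hιu, fun _ _ h => barFree_rel cs k u ι₀ hιu h⟩

lemma bar_mkAlgHom (x : FreeAlgebra k (Gen cs)) :
    bar cs k u ι₀ hιu (RingQuot.mkAlgHom k _ x) = barFree cs k u ι₀ hιu x := by
  rw [← AlgHom.coe_toRingHom, RingQuot.mkAlgHom_coe]
  exact RingQuot.lift_mkRingHom_apply _ _ x

lemma bar_algebraMap (c : k) :
    bar cs k u ι₀ hιu (algebraMap k _ c) = algebraMap k (CW cs k u) (ι₀ c) := by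
  rw [← (RingQuot.mkAlgHom k (CWrel cs k u)).commutes, bar_mkAlgHom, barFree_algebraMap]

lemma bar_gCW (i : B) : bar cs k u ι₀ hιu (gCW cs k u i) = ↑(gUnit cs k u ι₀ hιu i)⁻¹ :=
  (bar_mkAlgHom cs k u ι₀ hιu _).trans (barFree_gf cs k u ι₀ hιu i)

lemma bar_eCW (t : Refl cs) : bar cs k u ι₀ hιu (eCW cs k u t) = eCW cs k u t :=
  (bar_mkAlgHom cs k u ι₀ hιu _).trans (barFree_ef cs k u ι₀ hιu t)

lemma bar_eJ (J : Finset (Refl cs)) : bar cs k u ι₀ hιu (eJ cs k u J) = eJ cs k u J :=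
  (Finset.map_noncommProd J _ _ (bar cs k u ι₀ hιu)).trans
    (Finset.noncommProd_congr rfl (fun t _ => bar_eCW cs k u ι₀ hιu t) _)

lemma bar_gUnit_inv (i : B) :
    bar cs k u ι₀ hιu ↑(gUnit cs k u ι₀ hιu i)⁻¹ = gCW cs k u i := by
  have h := congrArg (bar cs k u ι₀ hιu) (gUnit cs k u ι₀ hιu i).mul_inv
  rw [map_mul, map_one, gUnit_val, bar_gCW] at h
  exact (Units.inv_mul_eq_one.mp h).symm

lemma bar_bar (hι₀ : ∀ c, ι₀ (ι₀ c) = c) (x : CW cs k u) :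
    bar cs k u ι₀ hιu (bar cs k u ι₀ hιu x) = x := by
  suffices (bar cs k u ι₀ hιu).comp (bar cs k u ι₀ hιu) = RingHom.id _ from
    RingHom.congr_fun this x
  refine CW.ringHom_ext cs k u (fun c => ?_) (fun i => ?_) (fun t => ?_) <;>
    simp only [RingHom.comp_apply, RingHom.id_apply]
  · rw [bar_algebraMap, bar_algebraMap, hι₀]
  · rw [bar_gCW, bar_gUnit_inv]
  · rw [bar_eCW, bar_eCW]

end BarInvolution

section Compatibility

variable {B : Type} {M : CoxeterMatrix B} {W : Type} [Group W] (cs : CoxeterSystem M W)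
variable (k : Type) [CommRing k] (u : B → k) (ι₀ : k ≃+* k) (hιu : ∀ i, ι₀ (u i) * u i = 1)

lemma bar_smul_gUnit (a : B → kˣ) (ha : ∀ i, ι₀ (a i) = ↑(a i)⁻¹) (i : B) :
    bar cs k u ι₀ hιu ↑(a i • gUnit cs k u ι₀ hιu i) = ↑(a i • gUnit cs k u ι₀ hιu i)⁻¹ := by
  rw [Units.val_smul, Units.smul_def, gUnit_val,
    map_smul_of_map_algebraMap _ ι₀.toRingHom (bar_algebraMap cs k u ι₀ hιu), bar_gCW,
    Units.smul_inv, Units.val_smul, Units.smul_def]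
  exact congrArg (· • _) (ha i)

lemma bar_mul_family_inv (a : B → kˣ) (ha : ∀ i, ι₀ (a i) = ↑(a i)⁻¹) (Hfam : W → CW cs k u)
    (hH : ∀ l, cs.IsReduced l →
      Hfam (cs.wordProd l) = (l.map fun i => (a i : k) • gCW cs k u i).prod) (w : W) :
    bar cs k u ι₀ hιu (Hfam w) * Hfam w⁻¹ = 1 ∧ Hfam w⁻¹ * bar cs k u ι₀ hιu (Hfam w) = 1 := by
  obtain ⟨l, hl, rfl⟩ := cs.exists_isReduced w
  set H : B → (CW cs k u)ˣ := fun i => a i • gUnit cs k u ι₀ hιu i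
  have hHl : ∀ l', cs.IsReduced l' → Hfam (cs.wordProd l') = ↑(l'.map H).prod := fun l' hl' => by
    rw [hH l' hl', Units.val_list_prod_map]
    rfl
  have hbar : bar cs k u ι₀ hιu (Hfam (cs.wordProd l)) = ↑((l.reverse.map H).prod)⁻¹ := by
    rw [hHl l hl, Units.val_list_prod_map]
    exact map_list_prod_eq_inv_prod_reverse (bar cs k u ι₀ hιu : CW cs k u →* CW cs k u) H
      (bar_smul_gUnit cs k u ι₀ hιu a ha) l
  rw [← cs.wordProd_reverse, hbar, hHl _ hl.reverse]
  exact ⟨Units.inv_mul _, Units.mul_inv _⟩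

lemma map_bar_eq {A : Type*} [Ring A] [Algebra k A] (p : CW cs k u →ₐ[k] A) (T : B → A)
    (hpg : ∀ i, p (gCW cs k u i) = T i) (hpe : ∀ t, p (eCW cs k u t) = 1) (Ψ : A →+* A)
    (hΨc : ∀ c, Ψ (algebraMap k A c) = algebraMap k A (ι₀ c)) (hΨT : ∀ i, T i * Ψ (T i) = 1)
    (x : CW cs k u) : p (bar cs k u ι₀ hιu x) = Ψ (p x) := by
  suffices (p : CW cs k u →+* A).comp (bar cs k u ι₀ hιu) = Ψ.comp p from
    RingHom.congr_fun this x
  refine CW.ringHom_ext cs k u (fun c => ?_) (fun i => ?_) (fun t => ?_) <;>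
    simp only [RingHom.comp_apply, RingHom.coe_coe]
  · rw [bar_algebraMap, AlgHom.commutes, AlgHom.commutes, hΨc]
  · have hinv : p ↑(gUnit cs k u ι₀ hιu i)⁻¹ * T i = 1 := by
      rw [← hpg, ← gUnit_val cs k u ι₀ hιu, ← map_mul, Units.inv_mul, map_one]
    rw [bar_gCW, hpg]
    exact left_inv_eq_right_inv hinv (hΨT i)
  · rw [bar_eCW, hpe, map_one]

lemma mul_map_eq_one_of_smul {A F : Type*} [Ring A] [Algebra k A] [FunLike F A A]
    [RingHomClass F A A] (Ψ : F)
    (hΨc : ∀ c, Ψ (algebraMap k A c) = algebraMap k A (ι₀ c)) (a : kˣ) (ha : ι₀ a = ↑a⁻¹)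
    {T : A} (h : (a : k) • T * Ψ ((a : k) • T) = 1) : T * Ψ T = 1 := by
  rwa [map_smul_of_map_algebraMap Ψ ι₀.toRingHom hΨc, RingEquiv.toRingHom_eq_coe,
    RingEquiv.coe_toRingHom, ha, smul_mul_smul_comm, ← Units.val_mul, mul_inv_cancel,
    Units.val_one, one_smul] at h

end Compatibility

lemma map_usq_mul_usq {B : Type} {k : Type} [CommRing k] (ι₀ : k ≃+* k) (v : B → kˣ)
    (hιv : ∀ i : B, ι₀ ((v i : k)) = (((v i)⁻¹ : kˣ) : k)) (i : B) :
    ι₀ (usq k v i) * usq k v i = 1 := by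
  rw [usq, map_pow, hιv, ← mul_pow, ← Units.val_mul, inv_mul_cancel, Units.val_one, one_pow]

/-- `k = ℤ[v_s^{±1}]` is modelled by a commutative ring with an involution `ι₀` such that
`ι₀ v_s = v_s⁻¹`; "mapping `v_s ↦ v_s⁻¹`" means being `ι₀`-semilinear. -/
theorem statement7_general {B : Type} {M : CoxeterMatrix B} {W : Type} [Group W]
    (cs : CoxeterSystem M W) (k : Type) [CommRing k]
    (ι₀ : k ≃+* k) (hinvol : ∀ c : k, ι₀ (ι₀ c) = c)
    (v : B → kˣ)
    (hιv : ∀ i : B, ι₀ ((v i : k)) = (((v i)⁻¹ : kˣ) : k))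
    (Hfam : W → CW cs k (usq k v))
    (hH : ∀ l : List B, cs.IsReduced l →
      Hfam (cs.wordProd l) =
        (l.map fun i => (-((((v i)⁻¹ : kˣ)) : k)) • gCW cs k (usq k v) i).prod) :
    ∃ Φ : CW cs k (usq k v) ≃+* CW cs k (usq k v),
      (∀ x, Φ (Φ x) = x) ∧
      (∀ c : k, Φ (algebraMap k (CW cs k (usq k v)) c) =
        algebraMap k (CW cs k (usq k v)) (ι₀ c)) ∧
      (∀ J : Finset (Refl cs), Φ (eJ cs k (usq k v) J) = eJ cs k (usq k v) J) ∧
      (∀ w : W, Φ (Hfam w) * Hfam w⁻¹ = 1 ∧ Hfam w⁻¹ * Φ (Hfam w) = 1) ∧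
      (∀ p : CW cs k (usq k v) →ₐ[k] HW M k (usq k v),
        (∀ i : B, p (gCW cs k (usq k v) i) = THW M k (usq k v) i) →
        (∀ t : Refl cs, p (eCW cs k (usq k v) t) = 1) →
        ∀ HfamH : W → HW M k (usq k v),
        (∀ l : List B, cs.IsReduced l →
          HfamH (cs.wordProd l) =
            (l.map fun i => (-((((v i)⁻¹ : kˣ)) : k)) • THW M k (usq k v) i).prod) →
        ∀ Ψ : HW M k (usq k v) ≃+* HW M k (usq k v),
          (∀ c : k, Ψ (algebraMap k (HW M k (usq k v)) c) =
            algebraMap k (HW M k (usq k v)) (ι₀ c)) →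
          (∀ w : W, Ψ (HfamH w) * HfamH w⁻¹ = 1 ∧ HfamH w⁻¹ * Ψ (HfamH w) = 1) →
          ∀ x : CW cs k (usq k v), p (Φ x) = Ψ (p x)) := by
  have hιu := map_usq_mul_usq ι₀ v hιv
  have hιa : ∀ i, ι₀ ((-(v i)⁻¹ : kˣ) : k) = ((-(v i)⁻¹)⁻¹ : kˣ) := fun i => by
    rw [Units.val_neg, map_neg, inv_neg, inv_inv, Units.val_neg, ← hιv, hinvol]
  have hbar := bar_bar cs k (usq k v) ι₀ hιu hinvol
  refine ⟨RingEquiv.ofRingHom (bar cs k _ ι₀ hιu) (bar cs k _ ι₀ hιu) (RingHom.ext hbar)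
    (RingHom.ext hbar), hbar, bar_algebraMap cs k _ ι₀ hιu, bar_eJ cs k _ ι₀ hιu,
    bar_mul_family_inv cs k _ ι₀ hιu (fun i => -(v i)⁻¹) hιa Hfam hH, ?_⟩
  intro p hpg hpe HfamH hHfamH Ψ hΨc hΨH
  refine map_bar_eq cs k _ ι₀ hιu p _ hpg hpe Ψ hΨc (fun i => ?_)
  have hs : HfamH (cs.simple i) = ((-(v i)⁻¹ : kˣ) : k) • THW M k (usq k v) i := by
    simpa using hHfamH [i] (by simp [CoxeterSystem.IsReduced])
  have h := (hΨH (cs.simple i)).2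
  rw [cs.inv_simple, hs] at h
  exact mul_map_eq_one_of_smul k ι₀ Ψ hΨc _ (hιa i) h

/-- Over `k = ℤ[v_s^{±1}]` (encoded by a commutative ring `k` with an
involution `ι₀` and units `v_s` satisfying `ι₀(v_s) = v_s⁻¹`, `u_s = v_s²`), there is an
involutive ring automorphism of `C_W` mapping `v_s ↦ v_s⁻¹` (on scalars, via `ι₀`),
`H_w ↦ (H_{w⁻¹})⁻¹` and `e_{W₀} ↦ e_{W₀}`, compatible with Lusztig's involution of the
Iwahori–Hecke algebra `H_W` through the projection `𝔭`. -/
theorem statement7 {B : Type} {M : CoxeterMatrix B} {W : Type} [Group W]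
    (cs : CoxeterSystem M W) (k : Type) [CommRing k]
    (ι₀ : k ≃+* k) (hinvol : ∀ c : k, ι₀ (ι₀ c) = c)
    (v : B → kˣ) (hv : ∀ i j : B, IsConj (cs.simple i) (cs.simple j) → v i = v j)
    (hιv : ∀ i : B, ι₀ ((v i : k)) = (((v i)⁻¹ : kˣ) : k))
    (Hfam : W → CW cs k (usq k v))
    (hH : ∀ l : List B, cs.IsReduced l →
      Hfam (cs.wordProd l) =
        (l.map fun i => (-((((v i)⁻¹ : kˣ)) : k)) • gCW cs k (usq k v) i).prod) :
    ∃ Φ : CW cs k (usq k v) ≃+* CW cs k (usq k v),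
      (∀ x, Φ (Φ x) = x) ∧
      (∀ c : k, Φ (algebraMap k (CW cs k (usq k v)) c) =
        algebraMap k (CW cs k (usq k v)) (ι₀ c)) ∧
      (∀ J : Finset (Refl cs), Φ (eJ cs k (usq k v) J) = eJ cs k (usq k v) J) ∧
      (∀ w : W, Φ (Hfam w) * Hfam w⁻¹ = 1 ∧ Hfam w⁻¹ * Φ (Hfam w) = 1) ∧
      (∀ p : CW cs k (usq k v) →ₐ[k] HW M k (usq k v),
        (∀ i : B, p (gCW cs k (usq k v) i) = THW M k (usq k v) i) →
        (∀ t : Refl cs, p (eCW cs k (usq k v) t) = 1) →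
        ∀ HfamH : W → HW M k (usq k v),
        (∀ l : List B, cs.IsReduced l →
          HfamH (cs.wordProd l) =
            (l.map fun i => (-((((v i)⁻¹ : kˣ)) : k)) • THW M k (usq k v) i).prod) →
        ∀ Ψ : HW M k (usq k v) ≃+* HW M k (usq k v),
          (∀ c : k, Ψ (algebraMap k (HW M k (usq k v)) c) =
            algebraMap k (HW M k (usq k v)) (ι₀ c)) →
          (∀ w : W, Ψ (HfamH w) * HfamH w⁻¹ = 1 ∧ HfamH w⁻¹ * Ψ (HfamH w) = 1) →
          ∀ x : CW cs k (usq k v), p (Φ x) = Ψ (p x)) :=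
  statement7_general cs k ι₀ hinvol v hιv Hfam hH

end CWpaper
end
end
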